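/- Let ε ∈ (0,1) and let I be a nested discrete inventory staggering instance, i.e., when the items are indexed so that T_1 ≤ ⋯ ≤ T_n, each time interval T_i divides T_{i+1}. Let S_1, …, S_M be pairwise disjoint subsets of the items satisfying the separation property: T_{i1} ≤ ε·T_{i2} for every i1 ∈ S_{m1} and i2 ∈ S_{m2} with 1 ≤ m1 < m2 ≤ M. Then OPT^disc(I_{S_1 ∪ ⋯ ∪ S_M}) ≥ (1 − 2ε)·Σ_{m=1}^M OPT^disc(I_{S_m}), where I_S denotes the restriction of I to the items of S. -/

import Mathlib

noncomputable def invLevel (T H : ℕ) (τ t : ℤ) : ℝ :=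
  (H : ℝ) * (1 - (((t - τ) % (T : ℤ) : ℤ) : ℝ) / (T : ℝ))

noncomputable def totalInv {ι : Type*} [Fintype ι] (T H : ι → ℕ) (τ : ι → ℤ) (t : ℤ) : ℝ :=
  ∑ i, invLevel (T i) (H i) (τ i) t

def cycleLen {ι : Type*} [Fintype ι] (T : ι → ℕ) : ℕ := Finset.univ.lcm T

noncomputable def Imax {ι : Type*} [Fintype ι] (T H : ι → ℕ) (τ : ι → ℤ) : ℝ :=
  sSup (totalInv T H τ '' Set.Ico (0 : ℤ) (cycleLen T : ℤ))

noncomputable def OPTdisc {ι : Type*} [Fintype ι] (T H : ι → ℕ) : ℝ :=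
  sInf (Set.range (Imax T H))

/-!
Fix shifts for the union and add the groups one at a time, in order of increasing periods. By
nestedness the groups added so far repeat with period `P`, the largest of their periods, and by
separation `P ≤ ε·T_i` for every item `i` of the next group. So some time less than `P` after a
peak of the next group sees the earlier groups in any prescribed state; during those fewer than
`P` steps each new item loses at most `ε·H_i`, and `Σ H_i ≤ 2·peak` since every item holds at
least `H_i / 2` on average. Inductively some time sees at least `(1 - 2ε)` times the sum of the
group peaks, and each group peak is at least the group's optimum.
-/

open Finset Function

namespace Function.Periodic

variable {M : Type*} {f : ℤ → M} {c : ℕ}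

theorem sum_range_add_eq [AddCancelCommMonoid M] (hf : Periodic f c) (a b : ℤ) :
    ∑ x ∈ range c, f (a + x) = ∑ x ∈ range c, f (b + x) := by
  have step : ∀ a : ℤ, ∑ x ∈ range c, f (a + 1 + x) = ∑ x ∈ range c, f (a + x) := by
    intro a
    have h := (sum_range_succ (fun x : ℕ => f (a + x)) c).symm.trans
      (sum_range_succ' (fun x : ℕ => f (a + x)) c)
    push_cast at h
    rw [hf a, add_zero] at h
    simpa only [add_assoc, add_comm (1 : ℤ)] using (add_right_cancel h).symm
  have const : ∀ a : ℤ, ∑ x ∈ range c, f (a + x) = ∑ x ∈ range c, f (0 + x) := by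
    intro a
    induction a using Int.induction_on with
    | zero => rfl
    | succ k ih => rw [step, ih]
    | pred k ih => rw [← ih, ← step, sub_add_cancel]
  rw [const a, const b]

theorem sum_range_mul_eq [AddCommMonoid M] (hf : Periodic f c) (q : ℕ) :
    ∑ x ∈ range (q * c), f x = q • ∑ x ∈ range c, f x := by
  induction q with
  | zero => simp
  | succ q ih =>
    rw [Nat.succ_mul, sum_range_add, ih, succ_nsmul]
    congr 1
    refine sum_congr rfl fun x _ => ?_
    rw [Nat.cast_add, add_comm, Nat.cast_mul]
    exact hf.nat_mul q x

end Function.Periodic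

theorem invLevel_periodic (T H : ℕ) (τ : ℤ) : Periodic (invLevel T H τ) T := by
  intro t
  simp only [invLevel, add_sub_right_comm, Int.add_emod_right]

section invLevel

variable {T H : ℕ}

theorem invLevel_add_of_dvd (τ t : ℤ) {c : ℤ} (hc : (T : ℤ) ∣ c) :
    invLevel T H τ (t + c) = invLevel T H τ t := by
  obtain ⟨k, rfl⟩ := hc
  simp only [invLevel, add_sub_right_comm, Int.add_mul_emod_self_left]

theorem invLevel_sub_le_invLevel_add (hT : 0 < T) (τ t : ℤ) {ε : ℝ} {d : ℤ} (hd : 0 ≤ d)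
    (hdε : (d : ℝ) ≤ ε * T) : invLevel T H τ t - ε * H ≤ invLevel T H τ (t + d) := by
  have hT' : (0 : ℝ) < T := by exact_mod_cast hT
  have hres : (t + d - τ) % T ≤ (t - τ) % T + d := by
    have hx : 0 ≤ (t - τ) % T + d := add_nonneg (Int.emod_nonneg _ (by omega)) hd
    rw [add_sub_right_comm, ← Int.emod_add_emod, Int.emod_def ((t - τ) % T + d)]
    nlinarith [Int.ediv_nonneg hx (Int.natCast_nonneg T)]
  have hres' : (((t + d - τ) % T : ℤ) : ℝ) ≤ (((t - τ) % T : ℤ) : ℝ) + d := by exact_mod_cast hres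
  unfold invLevel
  have hdiv : (((t + d - τ) % T : ℤ) : ℝ) / T ≤ (((t - τ) % T : ℤ) : ℝ) / T + ε := by
    rw [div_add' _ _ _ hT'.ne', div_le_div_iff_of_pos_right hT']
    linarith
  nlinarith [(Nat.cast_nonneg H : (0 : ℝ) ≤ H)]

theorem sum_range_invLevel (hT : 0 < T) (τ : ℤ) :
    ∑ t ∈ range T, invLevel T H τ t = H * (T + 1) / 2 := by
  have hT' : (0 : ℝ) < T := by exact_mod_cast hT
  have gauss : ∀ N : ℕ, (∑ x ∈ range N, (x : ℝ)) * 2 = N * (N - 1) := by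
    intro N
    induction N with
    | zero => simp
    | succ N ih => rw [sum_range_succ, add_mul, ih]; push_cast; ring
  have hshift := (invLevel_periodic T H τ).sum_range_add_eq 0 τ
  simp only [zero_add] at hshift
  have hstart : ∀ x ∈ range T, invLevel T H τ (τ + x) = H * (1 - x / T) := fun x hx => by
    rw [invLevel, add_sub_cancel_left,
      Int.emod_eq_of_lt (Int.natCast_nonneg x) (by exact_mod_cast mem_range.1 hx)]
    rfl
  rw [hshift, sum_congr rfl hstart]
  simp only [mul_sub, mul_one, sum_sub_distrib, sum_const, card_range, nsmul_eq_mul,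
    mul_div_assoc', ← sum_div, ← mul_sum]
  field_simp
  linear_combination (-(H : ℝ)) * gauss T

theorem mul_div_two_le_sum_range_invLevel (hT : 0 < T) (τ : ℤ) {P : ℕ} (hP : T ∣ P) :
    (P * H : ℝ) / 2 ≤ ∑ t ∈ range P, invLevel T H τ t := by
  obtain ⟨q, rfl⟩ := hP
  rw [mul_comm T q, (invLevel_periodic T H τ).sum_range_mul_eq, sum_range_invLevel hT,
    nsmul_eq_mul]
  push_cast
  nlinarith [(Nat.cast_nonneg H : (0 : ℝ) ≤ H), (Nat.cast_nonneg q : (0 : ℝ) ≤ q)]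

end invLevel

section peak

variable {ι : Type*} [Fintype ι] {T : ι → ℕ} (H : ι → ℕ)

theorem cycleLen_pos (hT : ∀ i, 0 < T i) : 0 < cycleLen T :=
  Nat.pos_of_ne_zero fun h => by
    obtain ⟨i, -, hi⟩ := Finset.lcm_eq_zero_iff.1 h
    exact (hT i).ne' hi

theorem totalInv_periodic (τ : ι → ℤ) : Periodic (totalInv T H τ) (cycleLen T) := fun _ =>
  sum_congr rfl fun i _ =>
    invLevel_add_of_dvd _ _ (Int.natCast_dvd_natCast.2 (Finset.dvd_lcm (mem_univ i)))

theorem isGreatest_range_totalInv (hT : ∀ i, 0 < T i) (τ : ι → ℤ) :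
    IsGreatest (Set.range (totalInv T H τ)) (Imax T H τ) := by
  have hΛ : (0 : ℤ) < cycleLen T := by exact_mod_cast cycleLen_pos hT
  have hrange : totalInv T H τ '' Set.Ico 0 (cycleLen T : ℤ) = Set.range (totalInv T H τ) := by
    refine (Set.image_subset_range _ _).antisymm ?_
    rintro _ ⟨t, rfl⟩
    obtain ⟨s, hs, hst⟩ := (totalInv_periodic H τ).exists_mem_Ico₀ hΛ t
    exact ⟨s, hs, hst.symm⟩
  have hfin : (Set.range (totalInv T H τ)).Finite := hrange ▸ (Set.finite_Ico _ _).image _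
  rw [Imax, hrange]
  exact ⟨(Set.range_nonempty _).csSup_mem hfin, fun _ hx => le_csSup hfin.bddAbove hx⟩

theorem sum_div_two_le_Imax (hT : ∀ i, 0 < T i) (τ : ι → ℤ) :
    (∑ i, (H i : ℝ)) / 2 ≤ Imax T H τ := by
  have hΛ : (0 : ℝ) < cycleLen T := by exact_mod_cast cycleLen_pos hT
  refine le_of_mul_le_mul_left ?_ hΛ
  calc (cycleLen T : ℝ) * ((∑ i, (H i : ℝ)) / 2)
      = ∑ i, (cycleLen T * H i : ℝ) / 2 := by rw [mul_div_assoc', mul_sum, sum_div]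
    _ ≤ ∑ i, ∑ t ∈ range (cycleLen T), invLevel (T i) (H i) (τ i) t :=
      sum_le_sum fun i _ =>
        mul_div_two_le_sum_range_invLevel (hT i) (τ i) (Finset.dvd_lcm (mem_univ i))
    _ = ∑ t ∈ range (cycleLen T), totalInv T H τ t := sum_comm
    _ ≤ ∑ t ∈ range (cycleLen T), Imax T H τ :=
      sum_le_sum fun t _ => (isGreatest_range_totalInv H hT τ).2 ⟨t, rfl⟩
    _ = cycleLen T * Imax T H τ := by rw [sum_const, card_range, nsmul_eq_mul]

theorem Imax_nonneg (hT : ∀ i, 0 < T i) (τ : ι → ℤ) : 0 ≤ Imax T H τ :=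
  (by positivity : (0 : ℝ) ≤ (∑ i, (H i : ℝ)) / 2).trans (sum_div_two_le_Imax H hT τ)

theorem OPTdisc_le_Imax (hT : ∀ i, 0 < T i) (τ : ι → ℤ) : OPTdisc T H ≤ Imax T H τ :=
  csInf_le ⟨0, Set.forall_mem_range.2 (Imax_nonneg H hT)⟩ ⟨τ, rfl⟩

theorem le_OPTdisc {a : ℝ} (h : ∀ τ, a ≤ Imax T H τ) : a ≤ OPTdisc T H :=
  le_csInf (Set.range_nonempty _) (Set.forall_mem_range.2 h)

theorem OPTdisc_nonneg (hT : ∀ i, 0 < T i) : 0 ≤ OPTdisc T H :=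
  le_OPTdisc H (Imax_nonneg H hT)

end peak

section separated

variable {ι : Type*} {T : ι → ℕ} (H : ι → ℕ)

theorem lcm_le_of_nested [LinearOrder ι] (hnested : ∀ i j, i ≤ j → T i ∣ T j) {A : Finset ι}
    {x : ℝ} (hx : 0 ≤ x) (hA : ∀ j ∈ A, (T j : ℝ) ≤ x) : ((A.lcm T : ℕ) : ℝ) ≤ x + 1 := by
  rcases A.eq_empty_or_nonempty with rfl | hne
  · simpa using hx
  · have hlcm : A.lcm T = T (A.max' hne) := Nat.dvd_antisymm
      (Finset.lcm_dvd fun i hi => hnested _ _ (A.le_max' i hi)) (Finset.dvd_lcm (A.max'_mem hne))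
    rw [hlcm]
    linarith [hA _ (A.max'_mem hne)]

theorem totalInv_restrict (τ : ι → ℤ) (A : Finset ι) [Fintype A] (t : ℤ) :
    totalInv (fun i : A => T i) (fun i : A => H i) (fun i : A => τ i) t
      = ∑ i ∈ A, invLevel (T i) (H i) (τ i) t :=
  (sum_subtype A (fun _ => Iff.rfl) fun i => invLevel (T i) (H i) (τ i) t).symm

theorem exists_time_eq_on_ge_Imax (hT : ∀ i, 0 < T i) (τ : ι → ℤ) {A B : Finset ι} {ε : ℝ}
    (hε : 0 ≤ ε) (hB : ∀ i ∈ B, ((A.lcm T : ℕ) : ℝ) ≤ ε * T i + 1) (t₁ : ℤ) :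
    ∃ t, ∑ i ∈ A, invLevel (T i) (H i) (τ i) t = ∑ i ∈ A, invLevel (T i) (H i) (τ i) t₁ ∧
      (1 - 2 * ε) * Imax (fun i : B => T i) (fun i : B => H i) (fun i : B => τ i)
        ≤ ∑ i ∈ B, invLevel (T i) (H i) (τ i) t := by
  have hTB : ∀ i : B, 0 < T i := fun i => hT i
  obtain ⟨⟨t₀, ht₀⟩, -⟩ := isGreatest_range_totalInv (fun i : B => H i) hTB fun i => τ i
  have hhalf := sum_div_two_le_Imax (fun i : B => H i) hTB fun i => τ i
  rw [totalInv_restrict] at ht₀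
  rw [sum_coe_sort B fun i => (H i : ℝ)] at hhalf
  have hP : (0 : ℤ) < (A.lcm T : ℕ) := by
    exact_mod_cast Nat.pos_of_ne_zero (Finset.lcm_ne_zero_iff.2 fun i _ => (hT i).ne')
  set d := (t₁ - t₀) % ((A.lcm T : ℕ) : ℤ) with hd
  refine ⟨t₀ + d, sum_congr rfl fun i hi => ?_, ?_⟩
  · have ht₁ : t₁ = t₀ + d + ((A.lcm T : ℕ) : ℤ) * ((t₁ - t₀) / ((A.lcm T : ℕ) : ℤ)) := by
      rw [hd, add_assoc, Int.emod_add_mul_ediv, add_sub_cancel]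
    rw [ht₁, invLevel_add_of_dvd _ (t₀ + d)]
    exact dvd_mul_of_dvd_left (Int.natCast_dvd_natCast.2 (Finset.dvd_lcm hi)) _
  · have hdε : ∀ i ∈ B, (d : ℝ) ≤ ε * T i := by
      intro i hi
      have hdP : d < ((A.lcm T : ℕ) : ℤ) := Int.emod_lt_of_pos _ hP
      have : (d : ℝ) + 1 ≤ (A.lcm T : ℕ) := by exact_mod_cast (by omega : d + 1 ≤ _)
      linarith [hB i hi]
    calc (1 - 2 * ε) * Imax (fun i : B => T i) (fun i : B => H i) (fun i : B => τ i)
        ≤ ∑ i ∈ B, invLevel (T i) (H i) (τ i) t₀ - ε * ∑ i ∈ B, (H i : ℝ) := by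
          rw [ht₀]; nlinarith
      _ ≤ ∑ i ∈ B, invLevel (T i) (H i) (τ i) (t₀ + d) := by
          rw [mul_sum, ← sum_sub_distrib]
          exact sum_le_sum fun i hi => invLevel_sub_le_invLevel_add (hT i) (τ i) t₀
            (Int.emod_nonneg _ hP.ne') (hdε i hi)

theorem exists_time_ge_sum_Imax [LinearOrder ι] (hT : ∀ i, 0 < T i)
    (hnested : ∀ i j, i ≤ j → T i ∣ T j) {ε : ℝ} (hε : 0 ≤ ε) (τ : ι → ℤ) {M : ℕ}
    (S : Fin M → Finset ι) (hdisj : Pairwise (Disjoint on S))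
    (hsep : ∀ m₁ m₂, m₁ < m₂ → ∀ i₁ ∈ S m₁, ∀ i₂ ∈ S m₂, (T i₁ : ℝ) ≤ ε * T i₂) :
    ∃ t, (1 - 2 * ε) * ∑ m, Imax (fun i : S m => T i) (fun i : S m => H i) (fun i : S m => τ i)
      ≤ ∑ i ∈ univ.biUnion S, invLevel (T i) (H i) (τ i) t := by
  induction M with
  | zero => exact ⟨0, by simp⟩
  | succ M ih =>
    obtain ⟨t₁, ht₁⟩ := ih (fun m => S m.castSucc)
      (hdisj.comp_of_injective (Fin.castSucc_injective M))
      fun m₁ m₂ h => hsep _ _ (Fin.castSucc_lt_castSucc_iff.2 h)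
    set A := univ.biUnion fun m : Fin M => S m.castSucc
    have hunion : univ.biUnion S = A ∪ S (Fin.last M) := by
      ext i
      simp only [A, mem_biUnion, mem_union, mem_univ, true_and, Fin.exists_fin_succ']
    have hdisjA : Disjoint A (S (Fin.last M)) :=
      (disjoint_biUnion_left _ _ _).2 fun m _ => hdisj (Fin.castSucc_lt_last m).ne
    have hlcm : ∀ i ∈ S (Fin.last M), ((A.lcm T : ℕ) : ℝ) ≤ ε * T i + 1 := fun i hi =>
      lcm_le_of_nested hnested (by positivity) fun j hj => by
        obtain ⟨m, -, hm⟩ := mem_biUnion.1 hj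
        exact hsep _ _ (Fin.castSucc_lt_last m) j hm i hi
    obtain ⟨t, hA, hB⟩ := exists_time_eq_on_ge_Imax H hT τ hε hlcm t₁
    refine ⟨t, ?_⟩
    rw [Fin.sum_univ_castSucc, mul_add, hunion, sum_union hdisjA, hA]
    exact add_le_add ht₁ hB

end separated

theorem stmt17_general {n : ℕ} (T H : Fin n → ℕ) (hT : ∀ i, 0 < T i)
    (hnested : ∀ i j : Fin n, i ≤ j → T i ∣ T j)
    (ε : ℝ) (hε : ε ∈ Set.Ioo (0 : ℝ) 1)
    (M : ℕ) (S : Fin M → Finset (Fin n))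
    (hdisj : ∀ m1 m2, m1 ≠ m2 → Disjoint (S m1) (S m2))
    (hsep : ∀ m1 m2 : Fin M, m1 < m2 →
      ∀ i1 ∈ S m1, ∀ i2 ∈ S m2, (T i1 : ℝ) ≤ ε * (T i2 : ℝ)) :
    (1 - 2 * ε) * ∑ m, OPTdisc (fun i : {x // x ∈ S m} => T i.1) (fun i => H i.1)
      ≤ OPTdisc (fun i : {x // x ∈ Finset.univ.biUnion S} => T i.1)
          (fun i => H i.1) := by
  -- the union subtype of the statement carries a different, but equal, `Fintype` instance
  rw [show (Subtype.fintype _ : Fintype {x // x ∈ univ.biUnion S}) = Finset.Subtype.fintype _ from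
    Subsingleton.elim _ _]
  have hTA : ∀ (A : Finset (Fin n)) (i : A), 0 < T i := fun _ i => hT i
  rcases le_or_gt 0 (1 - 2 * ε) with hpos | hneg
  · refine le_OPTdisc _ fun τ' => ?_
    set τ := extend Subtype.val τ' 0
    have hτ : (fun i : univ.biUnion S => τ i) = τ' :=
      funext fun i => Subtype.val_injective.extend_apply τ' 0 i
    obtain ⟨t, ht⟩ := exists_time_ge_sum_Imax H hT hnested hε.1.le τ S hdisj hsep
    calc (1 - 2 * ε) * ∑ m, OPTdisc (fun i : S m => T i) (fun i => H i)
        ≤ (1 - 2 * ε) * ∑ m, Imax (fun i : S m => T i) (fun i => H i) (fun i => τ i) :=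
          mul_le_mul_of_nonneg_left (sum_le_sum fun m _ => OPTdisc_le_Imax _ (hTA _) _)
            hpos
      _ ≤ totalInv (fun i : univ.biUnion S => T i) (fun i => H i) (fun i => τ i) t :=
          (totalInv_restrict H τ _ t).symm ▸ ht
      _ ≤ Imax (fun i : univ.biUnion S => T i) (fun i => H i) τ' :=
          hτ ▸ (isGreatest_range_totalInv _ (hTA _) _).2 ⟨t, rfl⟩
  · refine (mul_nonpos_of_nonpos_of_nonneg hneg.le (sum_nonneg fun m _ => ?_)).trans ?_ <;>
      exact OPTdisc_nonneg _ (hTA _)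

/-- Near-additivity for nested instances: if the time intervals are nested
(`T_i ∣ T_j` whenever `i ≤ j`) and `S_1, …, S_M` are pairwise disjoint item subsets
satisfying the separation property `T_{i1} ≤ ε·T_{i2}` for `i1 ∈ S_{m1}`, `i2 ∈ S_{m2}`
with `m1 < m2`, then `OPT^disc(I_{S_1∪⋯∪S_M}) ≥ (1−2ε)·Σ_m OPT^disc(I_{S_m})`. -/
theorem stmt17 {n : ℕ} (T H : Fin n → ℕ) (hT : ∀ i, 0 < T i) (hH : ∀ i, 0 < H i)
    (hnested : ∀ i j : Fin n, i ≤ j → T i ∣ T j)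
    (ε : ℝ) (hε : ε ∈ Set.Ioo (0 : ℝ) 1)
    (M : ℕ) (S : Fin M → Finset (Fin n))
    (hdisj : ∀ m1 m2, m1 ≠ m2 → Disjoint (S m1) (S m2))
    (hsep : ∀ m1 m2 : Fin M, m1 < m2 →
      ∀ i1 ∈ S m1, ∀ i2 ∈ S m2, (T i1 : ℝ) ≤ ε * (T i2 : ℝ)) :
    (1 - 2 * ε) * ∑ m, OPTdisc (fun i : {x // x ∈ S m} => T i.1) (fun i => H i.1)
      ≤ OPTdisc (fun i : {x // x ∈ Finset.univ.biUnion S} => T i.1)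
          (fun i => H i.1) :=
  stmt17_general T H hT hnested ε hε M S hdisj hsep
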